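/- arXiv:2604.05123 — 2 statements merged into one kernel-verified Lean document; each statement's English description precedes it below -/
import Mathlib

section
/- Let G be a tdlc group (a Hausdorff, locally compact, totally disconnected topological group), let S be a relatively compact subset of G (i.e. the closure of S is compact), and let H be the subgroup generated by S. Then H has an open envelope E in G: an open subgroup E of G containing H such that for every open subgroup O of G in which H is virtually contained (H ∩ O has finite index in H), E is virtually contained in O (E ∩ O has finite index in E). Moreover, for any open envelope E of H, the intersection Res_G(H) of all open subgroups of G normalized by H equals the discrete residual Res(E), the intersection of all open normal subgroups of E. -/
/-- A subgroup `O` of `G` is relatively open in the subgroup `L`, i.e. open for the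
subspace topology of `L`. -/
def relOpenIn {G : Type*} [Group G] [TopologicalSpace G] (L O : Subgroup G) : Prop :=
  ∃ V : Set G, IsOpen V ∧ (O : Set G) = V ∩ (L : Set G)

/-- The discrete residual of a subgroup `E` of `G`: the intersection of all subgroups of `E`
that are open in `E` (for the subspace topology) and normal in `E`. -/
def residualIn {G : Type*} [Group G] [TopologicalSpace G] (E : Subgroup G) : Set G :=
  ⋂ O ∈ {O : Subgroup G | O ≤ E ∧ relOpenIn E O ∧ ∀ g ∈ E, ∀ x ∈ O, g * x * g⁻¹ ∈ O},
    (O : Set G)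

/-- `Res_G(H)`: the intersection of all open subgroups of `G` that are normalized by `H`. -/
def resRel {G : Type*} [Group G] [TopologicalSpace G] (H : Subgroup G) : Set G :=
  ⋂ O ∈ {O : Subgroup G | IsOpen (O : Set G) ∧ ∀ h ∈ H, ∀ x ∈ O, h * x * h⁻¹ ∈ O},
    (O : Set G)

/-- `E` is an open envelope for `H` in `G`: an open subgroup containing `H` such that `E` is
virtually contained in every open subgroup of `G` in which `H` is virtually contained. -/
def IsOpenEnvelope {G : Type*} [Group G] [TopologicalSpace G] (H E : Subgroup G) : Prop :=
  IsOpen (E : Set G) ∧ H ≤ E ∧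
    ∀ O : Subgroup G, IsOpen (O : Set G) → O.relIndex H ≠ 0 → O.relIndex E ≠ 0

/-!
Fix a compact open subgroup `U` (van Dantzig) and a compact set `A = U K U` containing `S`, with
`K` symmetric and `1 ∈ K`. Among the open subgroups `P ⊇ S` choose one for which `A ∩ P` meets the
fewest left cosets of `U`, and put `E := ⟨A ∩ P⟩`, which is open since it contains `U ∩ P`. If
`⟨S⟩` is virtually contained in an open subgroup `O`, the group generated by `⟨S⟩` and the fixer in
`E` of the finite orbit `⟨S⟩O/O` is an open subgroup `P' ≤ E` virtually contained in `O`. By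
minimality `A ∩ P'` meets every `U`-coset that `A ∩ E` meets, which forces `E ⊆ U P'`; as `U` is
compact, `P'` has finite index in `E`.

For the residuals, an open normal subgroup of `E` is open in `G` and normalized by `H ≤ E`.
Conversely, if `O` is open and normalized by `H`, then `HO` is open and contains `H`, so `E ∩ HO`
has finite index in `E`. Since `HO` normalizes `O`, `O` has only finitely many `E`-conjugates, and
their intersection with `E` is an open normal subgroup of `E` contained in `O`.
-/

open scoped Pointwise
open Set MulAction

lemma MulAction.closure_le_stabilizer_of_forall_smul_mem {G α : Type*} [Group G] [MulAction G α]
    {X : Set G} {s : Set α} (hX : ∀ x ∈ X, x⁻¹ ∈ X) (h : ∀ x ∈ X, ∀ b ∈ s, x • b ∈ s) :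
    Subgroup.closure X ≤ stabilizer G s :=
  (Subgroup.closure_le _).2 fun x hx ↦ mem_stabilizer_set.2 fun b ↦
    ⟨fun hb ↦ by simpa using h x⁻¹ (hX x hx) _ hb, h x hx b⟩

namespace Subgroup

variable {G : Type*} [Group G]

lemma relIndex_eq_ncard_image (O L : Subgroup G) :
    O.relIndex L = ((QuotientGroup.mk : G → G ⧸ O) '' L).ncard := by
  have hsmul (l : L) : l • ((1 : G) : G ⧸ O) = ((l : G) : G ⧸ O) := by
    change (l : G) • ((1 : G) : G ⧸ O) = _
    simp
  have hstab : O.subgroupOf L = stabilizer L ((1 : G) : G ⧸ O) := by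
    ext l
    simp [mem_subgroupOf, mem_stabilizer_iff, hsmul, QuotientGroup.eq]
  rw [relIndex, hstab, index_stabilizer]
  congr 1
  ext q
  simp [mem_orbit_iff, hsmul]

lemma relIndex_ne_zero_iff_finite_image {O L : Subgroup G} :
    O.relIndex L ≠ 0 ↔ ((QuotientGroup.mk : G → G ⧸ O) '' L).Finite := by
  rw [relIndex_eq_ncard_image]
  refine ⟨Set.finite_of_ncard_ne_zero, fun hfin ↦ ((Set.ncard_pos hfin).2 ?_).ne'⟩
  exact ⟨_, mem_image_of_mem _ L.one_mem⟩

lemma closure_subset_mul_of_subset_mul {X : Set G} {C P : Subgroup G}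
    (hXinv : ∀ x ∈ X, x⁻¹ ∈ X) (hXC : ∀ x ∈ X, ∀ c ∈ C, x * c ∈ X)
    (hX : X ⊆ (C : Set G) * P) : (closure X : Set G) ⊆ (C : Set G) * P := by
  have hstab : closure X ≤ stabilizer G ((C : Set G) * P) := by
    refine closure_le_stabilizer_of_forall_smul_mem hXinv fun x hx y hy ↦ ?_
    obtain ⟨c, hc, p, hp, rfl⟩ := Set.mem_mul.1 hy
    obtain ⟨c', hc', p', hp', hxc⟩ := Set.mem_mul.1 (hX (hXC x hx c hc))
    exact Set.mem_mul.2 ⟨c', hc', p' * p, P.mul_mem hp' hp, by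
      rw [smul_eq_mul, ← mul_assoc, ← mul_assoc, hxc]⟩
  intro g hg
  simpa using (mem_stabilizer_set.1 (hstab hg) 1).2 ⟨1, C.one_mem, 1, P.one_mem, one_mul 1⟩

end Subgroup

lemma isOpen_fixingSubgroup_of_finite {G X : Type*} [Group G] [TopologicalSpace G]
    [TopologicalSpace X] [DiscreteTopology X] [MulAction G X] [ContinuousSMul G X] {s : Set X}
    (hs : s.Finite) : IsOpen (fixingSubgroup G s : Set G) := by
  have : (fixingSubgroup G s : Set G) = ⋂ x ∈ s, (stabilizer G x : Set G) := by
    ext g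
    simp [mem_fixingSubgroup_iff]
  rw [this]
  exact hs.isOpen_biInter fun x _ ↦ stabilizer_isOpen G x

lemma resRel_subset_residualIn {G : Type*} [Group G] [TopologicalSpace G] {H E : Subgroup G}
    (hEo : IsOpen (E : Set G)) (hHE : H ≤ E) :
    resRel H ⊆ residualIn E := by
  intro x hx
  simp only [residualIn, mem_iInter₂]
  rintro Q ⟨-, ⟨V, hV, hQV⟩, hQn⟩
  exact mem_iInter₂.1 hx Q ⟨hQV ▸ hV.inter hEo, fun h hh ↦ hQn h (hHE hh)⟩

section TopologicalGroup

variable {G : Type*} [Group G] [TopologicalSpace G] [IsTopologicalGroup G]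

open Subgroup

theorem exists_isCompact_isOpen_subgroup [T2Space G] [LocallyCompactSpace G]
    [TotallyDisconnectedSpace G] :
    ∃ U : Subgroup G, IsCompact (U : Set G) ∧ IsOpen (U : Set G) := by
  obtain ⟨C, hCc, hC1⟩ := exists_compact_mem_nhds (1 : G)
  obtain ⟨W, hWclopen, hW1, hWC⟩ := loc_compact_Haus_tot_disc_of_zero_dim.mem_nhds_iff.1 hC1
  have hWc : IsCompact W := hCc.of_isClosed_subset hWclopen.isClosed hWC
  obtain ⟨V, hV1, hVW⟩ := compact_open_separated_mul_left hWc hWclopen.isOpen subset_rfl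
  have hstab : Subgroup.closure (V ∩ V⁻¹) ≤ stabilizer G W :=
    closure_le_stabilizer_of_forall_smul_mem (fun x hx ↦ ⟨hx.2, by simpa using hx.1⟩)
      fun x hx w hw ↦ hVW (Set.mul_mem_mul hx.1 hw)
  have hUW : (stabilizer G W : Set G) ⊆ W := fun g hg ↦ by
    simpa using (mem_stabilizer_set.1 hg 1).2 hW1
  have hUo : IsOpen (stabilizer G W : Set G) :=
    isOpen_of_mem_nhds _ (Filter.mem_of_superset (Filter.inter_mem hV1 (inv_mem_nhds_one G hV1))
      fun x hx ↦ hstab (Subgroup.subset_closure hx))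
  exact ⟨_, hWc.of_isClosed_subset (isClosed_of_isOpen _ hUo) hUW, hUo⟩

lemma exists_isOpen_between_relIndex_ne_zero {M E O : Subgroup G} (hE : IsOpen (E : Set G))
    (hME : M ≤ E) (hO : IsOpen (O : Set G)) (hMO : O.relIndex M ≠ 0) :
    ∃ P : Subgroup G, IsOpen (P : Set G) ∧ M ≤ P ∧ P ≤ E ∧ O.relIndex P ≠ 0 := by
  have := QuotientGroup.discreteTopology hO
  set orb : Set (G ⧸ O) := QuotientGroup.mk '' M
  have hfin : orb.Finite := relIndex_ne_zero_iff_finite_image.1 hMO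
  have hMstab : M ≤ stabilizer G orb := by
    simpa using closure_le_stabilizer_of_forall_smul_mem (X := (M : Set G)) (s := orb)
      (fun x hx ↦ M.inv_mem hx)
      (fun m hm ↦ by rintro _ ⟨x, hx, rfl⟩; exact ⟨m * x, M.mul_mem hm hx, rfl⟩)
  refine ⟨M ⊔ (E ⊓ fixingSubgroup G orb),
    isOpen_mono le_sup_right (hE.inter (isOpen_fixingSubgroup_of_finite hfin)), le_sup_left,
    sup_le hME inf_le_left, relIndex_ne_zero_iff_finite_image.2 (hfin.subset ?_)⟩
  have hstab : M ⊔ (E ⊓ fixingSubgroup G orb) ≤ stabilizer G orb :=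
    sup_le hMstab (inf_le_right.trans (fixingSubgroup_le_stabilizer G orb))
  rintro _ ⟨p, hp, rfl⟩
  simpa using (mem_stabilizer_set.1 (hstab hp) _).2 ⟨1, M.one_mem, rfl⟩

lemma relIndex_ne_zero_of_image_inter_subset {U P E : Subgroup G} {A : Set G}
    (hUc : IsCompact (U : Set G)) (hPo : IsOpen (P : Set G)) (hAinv : ∀ a ∈ A, a⁻¹ ∈ A)
    (hAU : ∀ a ∈ A, ∀ u ∈ U, a * u ∈ A) (hE : Subgroup.closure (A ∩ E) = E) (hPE : P ≤ E)
    (himage : (QuotientGroup.mk '' (A ∩ E) : Set (G ⧸ U)) ⊆ QuotientGroup.mk '' (A ∩ P)) :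
    P.relIndex E ≠ 0 := by
  have hcover : A ∩ E ⊆ ((U ⊓ E : Subgroup G) : Set G) * P := by
    rintro a ⟨haA, haE⟩
    obtain ⟨x, ⟨-, hxP⟩, hx⟩ := himage ⟨a⁻¹, ⟨hAinv a haA, E.inv_mem haE⟩, rfl⟩
    have hxa : x⁻¹ * a⁻¹ ∈ U := QuotientGroup.eq.1 hx
    refine Set.mem_mul.2 ⟨a * x, ⟨?_, E.mul_mem haE (hPE hxP)⟩, x⁻¹, P.inv_mem hxP, by group⟩
    simpa using U.inv_mem hxa
  have hEU : (E : Set G) ⊆ (U : Set G) * P := by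
    have := closure_subset_mul_of_subset_mul (X := A ∩ E) (C := U ⊓ E)
      (fun x hx ↦ ⟨hAinv x hx.1, E.inv_mem hx.2⟩)
      (fun x hx c hc ↦ ⟨hAU x hx.1 c hc.1, E.mul_mem hx.2 hc.2⟩) hcover
    rw [hE] at this
    exact this.trans (Set.mul_subset_mul_right inter_subset_left)
  have := QuotientGroup.discreteTopology hPo
  refine relIndex_ne_zero_iff_finite_image.2
    (((hUc.image continuous_quotient_mk').finite_of_discrete).subset ?_)
  rintro _ ⟨e, he, rfl⟩
  obtain ⟨u, hu, p, hp, rfl⟩ := Set.mem_mul.1 (hEU he)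
  exact ⟨u, hu, QuotientGroup.eq.2 (by simpa using hp)⟩

theorem exists_isOpenEnvelope_closure {U : Subgroup G} (hUo : IsOpen (U : Set G))
    (hUc : IsCompact (U : Set G)) {A S : Set G} (hAc : IsCompact A) (hAinv : ∀ a ∈ A, a⁻¹ ∈ A)
    (hAU : ∀ a ∈ A, ∀ u ∈ U, a * u ∈ A) (hUA : (U : Set G) ⊆ A) (hSA : S ⊆ A) :
    ∃ E, IsOpenEnvelope (Subgroup.closure S) E := by
  have := QuotientGroup.discreteTopology hUo
  let cost (P : Subgroup G) : ℕ := (QuotientGroup.mk '' (A ∩ P) : Set (G ⧸ U)).ncard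
  obtain ⟨P, ⟨hPo, hSP⟩, hPmin⟩ := exists_minimalFor_of_wellFoundedLT
    (fun P : Subgroup G ↦ IsOpen (P : Set G) ∧ S ⊆ P) cost ⟨⊤, isOpen_univ, subset_univ S⟩
  set E := Subgroup.closure (A ∩ P)
  have hEP : E ≤ P := (Subgroup.closure_le _).2 inter_subset_right
  have hAE : A ∩ E = A ∩ P :=
    (inter_subset_inter_right _ hEP).antisymm fun x hx ↦ ⟨hx.1, Subgroup.subset_closure hx⟩
  have hEo : IsOpen (E : Set G) :=
    isOpen_mono (fun x hx ↦ Subgroup.subset_closure ⟨hUA hx.1, hx.2⟩ : U ⊓ P ≤ E) (hUo.inter hPo)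
  have hSE : Subgroup.closure S ≤ E :=
    (Subgroup.closure_le _).2 fun s hs ↦ Subgroup.subset_closure ⟨hSA hs, hSP hs⟩
  refine ⟨E, hEo, hSE, fun O hO hSO ↦ ?_⟩
  obtain ⟨P', hP'o, hSP', hP'E, hOP'⟩ := exists_isOpen_between_relIndex_ne_zero hEo hSE hO hSO
  have hfin : (QuotientGroup.mk '' (A ∩ E) : Set (G ⧸ U)).Finite :=
    (hAc.image continuous_quotient_mk').finite_of_discrete.subset (image_mono inter_subset_left)
  have hmono : (QuotientGroup.mk '' (A ∩ P') : Set (G ⧸ U)) ⊆ QuotientGroup.mk '' (A ∩ E) :=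
    image_mono (inter_subset_inter_right _ hP'E)
  have hcostE : cost E = cost P := by simp only [cost, hAE]
  have hcost : cost E ≤ cost P' := hcostE ▸ hPmin ⟨hP'o, fun s hs ↦ hSP' (Subgroup.subset_closure hs)⟩
    (hcostE ▸ ncard_le_ncard hmono hfin)
  have himage := (eq_of_subset_of_ncard_le hmono hcost hfin).symm.subset
  exact relIndex_ne_zero_trans hOP'
    (relIndex_ne_zero_of_image_inter_subset hUc hP'o hAinv hAU (by rw [hAE]) hP'E himage)

theorem exists_isOpenEnvelope_closure_of_subset_isCompact [T2Space G] [LocallyCompactSpace G]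
    [TotallyDisconnectedSpace G] {K S : Set G} (hK : IsCompact K) (hSK : S ⊆ K) :
    ∃ E, IsOpenEnvelope (Subgroup.closure S) E := by
  obtain ⟨U, hUc, hUo⟩ := exists_isCompact_isOpen_subgroup (G := G)
  have hsymm : ∀ k ∈ insert 1 (K ∪ K⁻¹), k⁻¹ ∈ insert 1 (K ∪ K⁻¹) := by
    rintro k (rfl | hk | hk) <;> simp_all
  refine exists_isOpenEnvelope_closure hUo hUc (A := U * insert 1 (K ∪ K⁻¹) * U)
    ((hUc.mul ((hK.union hK.inv).insert 1)).mul hUc) ?_ ?_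
    (fun u hu ↦ ⟨u * 1, ⟨u, hu, 1, mem_insert _ _, rfl⟩, 1, U.one_mem, by group⟩)
    (fun s hs ↦ ⟨1 * s, ⟨1, U.one_mem, s, Or.inr (Or.inl (hSK hs)), rfl⟩, 1, U.one_mem, by group⟩)
  · rintro _ ⟨_, ⟨u, hu, k, hk, rfl⟩, v, hv, rfl⟩
    exact ⟨v⁻¹ * k⁻¹, ⟨v⁻¹, U.inv_mem hv, k⁻¹, hsymm k hk, rfl⟩, u⁻¹, U.inv_mem hu, by group⟩
  · rintro _ ⟨_, ⟨u, hu, k, hk, rfl⟩, v, hv, rfl⟩ w hw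
    exact ⟨u * k, ⟨u, hu, k, hk, rfl⟩, v * w, U.mul_mem hv hw, by group⟩

lemma exists_relOpenIn_le_of_le_normalizer {E N O : Subgroup G} (hO : IsOpen (O : Set G))
    (hN : N ≤ normalizer (O : Set G)) (hNE : N.relIndex E ≠ 0) :
    ∃ Q : Subgroup G, Q ≤ E ∧ relOpenIn E Q ∧ (∀ g ∈ E, ∀ x ∈ Q, g * x * g⁻¹ ∈ Q) ∧ Q ≤ O := by
  let core : Subgroup G := ⨅ g ∈ E, O.comap (MulAut.conj g⁻¹).toMonoidHom
  have mem_core {x : G} : x ∈ core ↔ ∀ g ∈ E, g⁻¹ * x * g ∈ O := by simp [core, mem_iInf]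
  have : Finite (E ⧸ N.subgroupOf E) := Nat.finite_of_card_ne_zero hNE
  have hcore : (core : Set G) =
      ⋂ q : E ⧸ N.subgroupOf E, {x | ((q.out : E) : G)⁻¹ * x * q.out ∈ O} := by
    ext x
    simp only [SetLike.mem_coe, mem_core, mem_iInter, mem_ofPred_eq]
    refine ⟨fun h q ↦ h _ q.out.2, fun h g hg ↦ ?_⟩
    obtain ⟨n, hn⟩ := QuotientGroup.mk_out_eq_mul (N.subgroupOf E) ⟨g, hg⟩
    have hgn := h (QuotientGroup.mk ⟨g, hg⟩)
    rw [hn] at hgn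
    rw [mem_normalizer_iff''.1 (hN (mem_subgroupOf.1 n.2))]
    simpa [mul_assoc] using hgn
  refine ⟨E ⊓ core, inf_le_left, ⟨core, ?_, by rw [coe_inf, inter_comm]⟩, ?_,
    fun x hx ↦ by simpa using mem_core.1 hx.2 1 E.one_mem⟩
  · rw [hcore]
    exact isOpen_iInter_of_finite fun q ↦ hO.preimage (by fun_prop)
  · rintro g hg x ⟨hxE, hxc⟩
    refine ⟨E.mul_mem (E.mul_mem hg hxE) (E.inv_mem hg), mem_core.2 fun h hh ↦ ?_⟩
    simpa [mul_assoc] using mem_core.1 hxc (g⁻¹ * h) (E.mul_mem (E.inv_mem hg) hh)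

lemma IsOpenEnvelope.residualIn_subset_resRel {H E : Subgroup G} (hE : IsOpenEnvelope H E) :
    residualIn E ⊆ resRel H := by
  intro x hx
  simp only [resRel, mem_iInter₂]
  rintro O ⟨hO, hHO⟩
  have hNO : H ⊔ O ≤ normalizer (O : Set G) := sup_le (le_normalizer_iff.2 hHO) le_normalizer
  have hE' : (H ⊔ O).relIndex E ≠ 0 :=
    hE.2.2 _ (isOpen_mono le_sup_right hO) (by simp [relIndex_eq_one.2 le_sup_left])
  obtain ⟨Q, hQE, hQopen, hQn, hQO⟩ := exists_relOpenIn_le_of_le_normalizer hO hNO hE'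
  exact hQO (mem_iInter₂.1 hx Q ⟨hQE, hQopen, hQn⟩)

theorem IsOpenEnvelope.resRel_eq_residualIn {H E : Subgroup G} (hE : IsOpenEnvelope H E) :
    resRel H = residualIn E :=
  (resRel_subset_residualIn hE.1 hE.2.1).antisymm hE.residualIn_subset_resRel

end TopologicalGroup

theorem stmt7 {G : Type*} [Group G] [TopologicalSpace G] [IsTopologicalGroup G]
    [T2Space G] [LocallyCompactSpace G] [TotallyDisconnectedSpace G]
    (S : Set G) (hS : IsCompact (closure S)) :
    (∃ E : Subgroup G, IsOpenEnvelope (Subgroup.closure S) E) ∧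
    ∀ E : Subgroup G, IsOpenEnvelope (Subgroup.closure S) E →
      resRel (Subgroup.closure S) = residualIn E :=
  ⟨exists_isOpenEnvelope_closure_of_subset_isCompact hS subset_closure,
    fun _ hE ↦ hE.resRel_eq_residualIn⟩
end

section
/- Let C be a group and Γ_m a commensurated subgroup of C that is maximal in its commensurability class (no subgroup of C commensurable with Γ_m properly contains Γ_m). Let L be a tdlc group and τ : C → L a group homomorphism with dense image such that U_m, the closure of τ(Γ_m) in L, is a compact open subgroup of L with trivial normal core in L and τ⁻¹(U_m) = Γ_m. Then: (1) every compact subgroup of L containing U_m equals U_m (U_m is a maximal compact open subgroup of L); (2) every closed normal locally elliptic subgroup of L is trivial; (3) if moreover every subgroup Γ of C commensurable with Γ_m has finite index in its normalizer N_C(Γ), then L has trivial quasi-center: the only element of L whose centralizer in L is open is the identity. -/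
/-!
Since `Um` is open and `τ` has dense range, `[K : V] = [τ⁻¹ K : τ⁻¹ V]` for every open subgroup
`V ≤ K` of `L`: each coset `kV` is open, hence meets `τ C`. So if `Um ≤ K` with `[K : Um]` finite,
then `τ⁻¹ K ⊇ Γm` is commensurable with `Γm`, hence equal to it by maximality, and `K = Um`.
This gives (1).

For (2), the `Um`-conjugacy orbit of `n ∈ N` is a compact subset of `N`, hence lies in a compact
subgroup `K`. The subgroup `S` generated by the orbit is normalized by `Um`, so the closure of
`Um S ⊆ Um K` is a compact subgroup containing `Um`, hence equal to `Um`. Thus `N ≤ Um`, and `N`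
lies in the normal core of `Um`.

For (3), if `g` has open centralizer, pick an open subgroup `W ≤ Um` centralized by `g` and
normalized by `Um`. Then `τ⁻¹ W` is commensurable with `Γm`, so it has finite index in its
normalizer, and by the index identity `Um` has finite index in `N_L(W)`. Hence `N_L(W) = Um`,
which contains `g`. Conjugates of `g` also have open centralizers, so `g` lies in the normal core
of `Um`.
-/

/-- The conjugate `g A g⁻¹` of a subgroup. -/
def conjSubgroup {C : Type*} [Group C] (g : C) (A : Subgroup C) : Subgroup C :=
  A.map (MulAut.conj g).toMonoidHom

/-- A subgroup `N` of a topological group `L` is locally elliptic: every compact subset of `N`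
is contained in a compact subgroup of `N`. -/
def IsLocallyElliptic {L : Type*} [Group L] [TopologicalSpace L] (N : Subgroup L) : Prop :=
  ∀ S : Set L, S ⊆ (N : Set L) → IsCompact S →
    ∃ K : Subgroup L, K ≤ N ∧ IsCompact (K : Set L) ∧ S ⊆ (K : Set L)

open scoped Pointwise

namespace Subgroup

variable {G : Type*} [Group G]

theorem relIndex_eq_relIndex_of_le_of_subset_mul {H K K' : Subgroup G} (hK' : K' ≤ K)
    (hK : (K : Set G) ⊆ K' * H) : H.relIndex K' = H.relIndex K := by
  refine Nat.card_congr (Equiv.ofBijective (quotientSubgroupOfEmbeddingOfLE H hK')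
    ⟨(quotientSubgroupOfEmbeddingOfLE H hK').injective, fun q => ?_⟩)
  induction q using QuotientGroup.induction_on with
  | H k =>
    obtain ⟨k', hk', h, hh, hkk'⟩ := hK k.2
    refine ⟨QuotientGroup.mk ⟨k', hk'⟩, QuotientGroup.eq.mpr ?_⟩
    simpa [mem_subgroupOf, ← hkk'] using hh

variable [TopologicalSpace G] [IsTopologicalGroup G]

theorem relIndex_ne_zero_of_isOpen_of_isCompact {H K : Subgroup G} (hH : IsOpen (H : Set G))
    (hK : IsCompact (K : Set G)) : H.relIndex K ≠ 0 := by
  have : CompactSpace K := isCompact_iff_compactSpace.mp hK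
  have : Finite (K ⧸ H.subgroupOf K) :=
    quotient_finite_of_isOpen _ (hH.preimage continuous_subtype_val)
  exact (finiteIndex_of_finite_quotient (H := H.subgroupOf K)).index_ne_zero

theorem isOpen_centralizer_conj {g : G} (hg : IsOpen (centralizer {g} : Set G)) (b : G) :
    IsOpen (centralizer {b * g * b⁻¹} : Set G) := by
  have hle : (centralizer {g}).map (MulAut.conj b : G →* G) ≤ centralizer {b * g * b⁻¹} := by
    simpa using map_centralizer_le_centralizer_image {g} (MulAut.conj b : G →* G)
  refine isOpen_mono hle ?_
  rw [map_equiv_eq_comap_symm, coe_comap]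
  exact hg.preimage (show Continuous fun x => b⁻¹ * x * b by fun_prop)

theorem exists_isOpen_le_inf_le_normalizer {U V : Subgroup G} (hU : IsCompact (U : Set G))
    (hUo : IsOpen (U : Set G)) (hV : IsOpen (V : Set G)) :
    ∃ W : Subgroup G, IsOpen (W : Set G) ∧ W ≤ V ⊓ U ∧ U ≤ normalizer (W : Set G) := by
  have : CompactSpace U := isCompact_iff_compactSpace.mp hU
  have hVU : IsOpen ((V.subgroupOf U : Subgroup U) : Set U) := hV.preimage continuous_subtype_val
  obtain ⟨W, hW⟩ := IsTopologicalGroup.exist_openNormalSubgroup_sub_clopen_nhds_of_one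
    ⟨isClosed_of_isOpen _ hVU, hVU⟩ (one_mem (V.subgroupOf U))
  refine ⟨W.toSubgroup.map U.subtype, ?_, ?_, ?_⟩
  · rw [coe_map]
    exact hUo.isOpenMap_subtype_val _ W.isOpen
  · rintro _ ⟨w, hw, rfl⟩
    exact ⟨hW hw, w.2⟩
  · refine le_normalizer_iff.mpr ?_
    rintro u hu _ ⟨w, hw, rfl⟩
    exact ⟨⟨u, hu⟩ * w * ⟨u, hu⟩⁻¹, W.isNormal'.conj_mem w hw _, rfl⟩

variable [T2Space G]

theorem le_of_le_normalizer_of_le_of_isCompact {U S K : Subgroup G} (hU : IsCompact (U : Set G))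
    (hmaxU : ∀ K : Subgroup G, IsCompact (K : Set G) → U ≤ K → K = U)
    (hUS : U ≤ normalizer (S : Set G)) (hSK : S ≤ K) (hK : IsCompact (K : Set G)) : S ≤ U := by
  have hUK : IsCompact ((U : Set G) * (K : Set G)) := hU.mul hK
  have hsub : ((U ⊔ S).topologicalClosure : Set G) ⊆ U * K := by
    refine closure_minimal ?_ hUK.isClosed
    rw [coe_mul_of_left_le_normalizer_right U S hUS]
    exact Set.mul_subset_mul_left hSK
  have hclosure : (U ⊔ S).topologicalClosure = U :=
    hmaxU _ (hUK.of_isClosed_subset isClosed_closure hsub)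
      (le_sup_left.trans (le_topologicalClosure _))
  exact le_sup_right.trans ((le_topologicalClosure _).trans hclosure.le)

theorem Normal.le_of_isLocallyElliptic {U N : Subgroup G} (hU : IsCompact (U : Set G))
    (hmaxU : ∀ K : Subgroup G, IsCompact (K : Set G) → U ≤ K → K = U) (hN : N.Normal)
    (hNell : IsLocallyElliptic N) : N ≤ U := by
  intro n hn
  set X : Set G := (fun u => u * n * u⁻¹) '' (U : Set G)
  obtain ⟨K, -, hK, hXK⟩ := hNell X (by rintro _ ⟨u, -, rfl⟩; exact hN.conj_mem n hn u)
    (hU.image (by fun_prop))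
  have hUX : U ≤ normalizer X := by
    refine le_set_normalizer_iff.mpr ?_
    rintro u hu _ ⟨v, hv, rfl⟩
    exact ⟨u * v, mul_mem hu hv, by group⟩
  exact le_of_le_normalizer_of_le_of_isCompact hU hmaxU
    (hUX.trans (normalizer_le_normalizer_closure X)) ((closure_le K).mpr hXK) hK
    (subset_closure ⟨1, U.one_mem, by group⟩)

end Subgroup

section Schlichting

open Subgroup

theorem DenseRange.relIndex_comap {C L : Type*} [Group C] [Group L] [TopologicalSpace L]
    [IsTopologicalGroup L] {τ : C →* L} (hτ : DenseRange τ) {V K : Subgroup L}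
    (hV : IsOpen (V : Set L)) (hVK : V ≤ K) :
    (V.comap τ).relIndex (K.comap τ) = V.relIndex K := by
  rw [Subgroup.relIndex_comap, map_comap_eq]
  refine relIndex_eq_relIndex_of_le_of_subset_mul inf_le_right fun k hk => ?_
  obtain ⟨c, hc⟩ := hτ.exists_mem_open (hV.preimage (continuous_const_mul k⁻¹)) ⟨k, by simp⟩
  have hc' : k⁻¹ * τ c ∈ V := hc
  exact ⟨τ c, ⟨⟨c, rfl⟩, by simpa using mul_mem hk (hVK hc')⟩, (τ c)⁻¹ * k,
    by simpa using inv_mem hc', by group⟩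

variable {C L : Type*} [Group C] [Group L] [TopologicalSpace L] [IsTopologicalGroup L]
  {Γ : Subgroup C} {τ : C →* L} {U : Subgroup L}

theorem eq_of_le_of_relIndex_ne_zero
    (hmax : ∀ Γ' : Subgroup C, Γ'.Commensurable Γ → Γ ≤ Γ' → Γ' = Γ) (hτ : DenseRange τ)
    (hUo : IsOpen (U : Set L)) (hUΓ : U.comap τ = Γ) {K : Subgroup L} (hUK : U ≤ K)
    (hK : U.relIndex K ≠ 0) : K = U := by
  have hidx : Γ.relIndex (K.comap τ) = U.relIndex K := hUΓ ▸ hτ.relIndex_comap hUo hUK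
  have hΓK : Γ ≤ K.comap τ := hUΓ ▸ comap_mono hUK
  have hKΓ : K.comap τ = Γ :=
    hmax _ ⟨by rw [relIndex_eq_one.mpr hΓK]; exact one_ne_zero, hidx ▸ hK⟩ hΓK
  refine le_antisymm (relIndex_eq_one.mp ?_) hUK
  rw [← hidx, hKΓ, relIndex_self]

theorem eq_of_isCompact_of_le
    (hmax : ∀ Γ' : Subgroup C, Γ'.Commensurable Γ → Γ ≤ Γ' → Γ' = Γ) (hτ : DenseRange τ)
    (hUo : IsOpen (U : Set L)) (hUΓ : U.comap τ = Γ) {K : Subgroup L}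
    (hK : IsCompact (K : Set L)) (hUK : U ≤ K) : K = U :=
  eq_of_le_of_relIndex_ne_zero hmax hτ hUo hUΓ hUK
    (relIndex_ne_zero_of_isOpen_of_isCompact hUo hK)

theorem mem_of_isOpen_centralizer
    (hmax : ∀ Γ' : Subgroup C, Γ'.Commensurable Γ → Γ ≤ Γ' → Γ' = Γ)
    (hfin : ∀ Γ' : Subgroup C, Γ'.Commensurable Γ → Γ'.relIndex (normalizer (Γ' : Set C)) ≠ 0)
    (hτ : DenseRange τ) (hU : IsCompact (U : Set L)) (hUo : IsOpen (U : Set L))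
    (hUΓ : U.comap τ = Γ) {g : L} (hg : IsOpen (centralizer {g} : Set L)) : g ∈ U := by
  obtain ⟨W, hWo, hWle, hUW⟩ := exists_isOpen_le_inf_le_normalizer hU hUo hg
  have hWU : W ≤ U := hWle.trans inf_le_right
  have hcomm : (W.comap τ).Commensurable Γ := by
    rw [← hUΓ, Commensurable, hτ.relIndex_comap hWo hWU, relIndex_eq_one.mpr (comap_mono hWU)]
    exact ⟨relIndex_ne_zero_of_isOpen_of_isCompact hWo hU, one_ne_zero⟩
  have hN : U.relIndex (normalizer (W : Set L)) ≠ 0 := fun h0 =>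
    hfin _ hcomm <| relIndex_eq_zero_of_le_right (le_normalizer_comap τ) <| by
      rw [hτ.relIndex_comap hWo (hWU.trans hUW)]
      exact relIndex_eq_zero_of_le_left hWU h0
  have hgW : g ∈ normalizer (W : Set L) :=
    centralizer_le_normalizer _ (mem_centralizer_iff.mpr fun w hw =>
      mem_centralizer_singleton_iff.mp (hWle hw).1)
  exact eq_of_le_of_relIndex_ne_zero hmax hτ hUo hUΓ hUW hN ▸ hgW

end Schlichting

theorem stmt16_general {C L : Type*} [Group C] [Group L] [TopologicalSpace L] [IsTopologicalGroup L]
    [T2Space L]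
    (Γm : Subgroup C)
    (hmax : ∀ Γ' : Subgroup C, Subgroup.Commensurable Γ' Γm → Γm ≤ Γ' → Γ' = Γm)
    (τ : C →* L) (hdense : DenseRange τ)
    (Um : Subgroup L)
    (hUmcompact : IsCompact (Um : Set L)) (hUmopen : IsOpen (Um : Set L))
    (hUmcore : Um.normalCore = ⊥) (hcomap : Um.comap τ = Γm) :
    (∀ K : Subgroup L, IsCompact (K : Set L) → Um ≤ K → K = Um) ∧
    (∀ N : Subgroup L, IsClosed (N : Set L) → N.Normal → IsLocallyElliptic N → N = ⊥) ∧
    ((∀ Γ' : Subgroup C, Subgroup.Commensurable Γ' Γm → Γ'.relIndex (Subgroup.normalizer (Γ' : Set C)) ≠ 0) →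
      ∀ g : L, IsOpen ((Subgroup.centralizer {g} : Subgroup L) : Set L) → g = 1) := by
  have hmaxU : ∀ K : Subgroup L, IsCompact (K : Set L) → Um ≤ K → K = Um :=
    fun K hK hUK => eq_of_isCompact_of_le hmax hdense hUmopen hcomap hK hUK
  refine ⟨hmaxU, fun N _ hN hNell => ?_, fun hfin g hg => ?_⟩
  · rw [eq_bot_iff, ← hUmcore]
    exact Subgroup.normal_le_normalCore.mpr (hN.le_of_isLocallyElliptic hUmcompact hmaxU hNell)
  · have hcore : g ∈ Um.normalCore := fun b =>
      mem_of_isOpen_centralizer hmax hfin hdense hUmcompact hUmopen hcomap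
        (Subgroup.isOpen_centralizer_conj hg b)
    rwa [hUmcore, Subgroup.mem_bot] at hcore

theorem stmt16 {C L : Type*} [Group C] [Group L] [TopologicalSpace L] [IsTopologicalGroup L]
    [T2Space L] [LocallyCompactSpace L] [TotallyDisconnectedSpace L]
    (Γm : Subgroup C) (hcomm : ∀ g : C, Subgroup.Commensurable (conjSubgroup g Γm) Γm)
    (hmax : ∀ Γ' : Subgroup C, Subgroup.Commensurable Γ' Γm → Γm ≤ Γ' → Γ' = Γm)
    (τ : C →* L) (hdense : DenseRange τ)
    (Um : Subgroup L) (hUm : (Um : Set L) = closure (⇑τ '' (Γm : Set C)))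
    (hUmcompact : IsCompact (Um : Set L)) (hUmopen : IsOpen (Um : Set L))
    (hUmcore : Um.normalCore = ⊥) (hcomap : Um.comap τ = Γm) :
    (∀ K : Subgroup L, IsCompact (K : Set L) → Um ≤ K → K = Um) ∧
    (∀ N : Subgroup L, IsClosed (N : Set L) → N.Normal → IsLocallyElliptic N → N = ⊥) ∧
    ((∀ Γ' : Subgroup C, Subgroup.Commensurable Γ' Γm → Γ'.relIndex (Subgroup.normalizer (Γ' : Set C)) ≠ 0) →
      ∀ g : L, IsOpen ((Subgroup.centralizer {g} : Subgroup L) : Set L) → g = 1) :=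
  stmt16_general Γm hmax τ hdense Um hUmcompact hUmopen hUmcore hcomap
end
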